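/- (Lemma 1(d).) Let F be a finite field with s elements, u ≥ 3 an integer, and for 1 ≤ i ≤ u let ξ_i : F^u → F be the i-th coordinate projection. For 1 ≤ v ≤ u−2 let R_v be the family of s² functions {ξ_1 + μξ_2 + νξ_{v+2} : μ ∈ F, ν ∈ F∖{0}} ∪ {ξ_2 + νξ_{v+2} : ν ∈ F∖{0}} ∪ {ξ_{v+2}}. Then for any choice of one function h_w ∈ R_w for each w = 1,…,u−2, any index 1 ≤ v ≤ u−2 and any h′ ∈ R_v with h′ ≠ h_v, the u−1 functions h_1, …, h_{u−2}, h′ satisfy: for every (u−1)-tuple (a_1,…,a_{u−1}) ∈ F^{u−1}, the number of points x ∈ F^u with (h_1(x),…,h_{u−2}(x),h′(x)) = (a_1,…,a_{u−1}) is exactly s; that is, they form an OA(s^u, u−1, s, u−1). -/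

import Mathlib

open scoped Classical

set_option linter.unusedSectionVars false

section Aux

variable {F : Type} [Field F] [Fintype F] [DecidableEq F]

def st14A : Option (Option F × {y : F // y ≠ 0}) → F
  | some (some _, _) => 1
  | some (none, _) => 0
  | none => 0

def st14B : Option (Option F × {y : F // y ≠ 0}) → F
  | some (some μ, _) => μ
  | some (none, _) => 1
  | none => 0

def st14N : Option (Option F × {y : F // y ≠ 0}) → F
  | some (_, ν) => ν.1
  | none => 1

lemma st14N_ne_zero (o : Option (Option F × {y : F // y ≠ 0})) : st14N o ≠ 0 := by
  rcases o with _ | ⟨_ | μ, ν⟩ <;> simp [st14N] <;> exact ν.2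


lemma st14_key (o o' : Option (Option F × {y : F // y ≠ 0})) (h : o' ≠ o) :
    st14N o * st14A o' - st14N o' * st14A o ≠ 0 ∨
    st14N o * st14B o' - st14N o' * st14B o ≠ 0 := by
  rcases o with _ | ⟨_ | μ, ν⟩ <;> rcases o' with _ | ⟨_ | μ', ν'⟩ <;>
    simp only [st14A, st14B, st14N, mul_one, mul_zero, one_mul, zero_mul, sub_zero,
      zero_sub, neg_ne_zero]
  · exact absurd rfl h
  · right; exact one_ne_zero
  · left; exact one_ne_zero
  · right; exact one_ne_zero
  · right
    intro hc
    exact h (by simp [Subtype.ext (sub_eq_zero.mp hc)])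
  · left; exact ν.2
  · left; exact one_ne_zero
  · left; exact ν'.2
  · by_cases hν : ν.1 = ν'.1
    · right
      have hμ : μ' ≠ μ := fun hμ => h (by simp [hμ, Subtype.ext hν.symm])
      intro hc
      rw [hν] at hc
      have h2 : ν'.1 * μ' = ν'.1 * μ := by linear_combination hc
      exact hμ (mul_left_cancel₀ ν'.2 h2)
    · exact Or.inl fun hc => hν (sub_eq_zero.mp hc)

lemma st14_card_line (A B C : F) (h : A ≠ 0 ∨ B ≠ 0) :
    (Finset.univ.filter (fun p : F × F => A * p.1 + B * p.2 = C)).card = Fintype.card F := by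
  rcases h with hA | hB
  · rw [← Finset.card_univ]
    refine Finset.card_nbij' (fun p => p.2) (fun q => (A⁻¹ * (C - B * q), q)) ?_ ?_ ?_ ?_
    · intro p _; exact Finset.mem_univ _
    · intro q _
      simp only [Finset.mem_coe, Finset.mem_filter, Finset.mem_univ, true_and]
      field_simp
      ring
    · intro p hp
      simp only [Finset.mem_coe, Finset.mem_filter, Finset.mem_univ, true_and] at hp
      have h1 : p.1 = A⁻¹ * (C - B * p.2) := by field_simp; linear_combination hp
      exact Prod.ext h1.symm rfl
    · intro q _; rfl
  · rw [← Finset.card_univ]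
    refine Finset.card_nbij' (fun p => p.1) (fun q => (q, B⁻¹ * (C - A * q))) ?_ ?_ ?_ ?_
    · intro p _; exact Finset.mem_univ _
    · intro q _
      simp only [Finset.mem_coe, Finset.mem_filter, Finset.mem_univ, true_and]
      field_simp
      ring
    · intro p hp
      simp only [Finset.mem_coe, Finset.mem_filter, Finset.mem_univ, true_and] at hp
      have h2 : p.2 = B⁻¹ * (C - A * p.1) := by field_simp; linear_combination hp
      exact Prod.ext rfl h2.symm
    · intro q _; rfl

end Aux

/-- Lemma 1(d): choosing one member `h_w ∈ R_w` for each `w = 1,…,u-2`, and another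
member `h' ∈ R_v` with `h' ≠ h_v`, the `u-1` functions `h₁,…,h_{u-2}, h'` attain every
`(u-1)`-tuple of values exactly `s` times (an OA(s^u, u-1, s, u-1)). -/
theorem statement14 (F : Type) [Field F] [Fintype F] [DecidableEq F]
    (s u : ℕ) (hcard : Fintype.card F = s) (hu : 3 ≤ u)
    (R : ℕ → Option (Option F × {y : F // y ≠ 0}) → (Fin u → F) → F)
    (hR1 : ∀ (v : ℕ) (_ : 1 ≤ v) (_ : v ≤ u - 2) (μ : F) (ν : {y : F // y ≠ 0}),
      R v (some (some μ, ν)) =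
        fun x => x ⟨0, by omega⟩ + μ * x ⟨1, by omega⟩ + ν.1 * x ⟨v + 1, by omega⟩)
    (hR2 : ∀ (v : ℕ) (_ : 1 ≤ v) (_ : v ≤ u - 2) (ν : {y : F // y ≠ 0}),
      R v (some (none, ν)) = fun x => x ⟨1, by omega⟩ + ν.1 * x ⟨v + 1, by omega⟩)
    (hR3 : ∀ (v : ℕ) (_ : 1 ≤ v) (_ : v ≤ u - 2),
      R v none = fun x => x ⟨v + 1, by omega⟩) :
    ∀ c : ℕ → Option (Option F × {y : F // y ≠ 0}),
    ∀ (v : ℕ), 1 ≤ v → v ≤ u - 2 →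
    ∀ i' : Option (Option F × {y : F // y ≠ 0}), i' ≠ c v →
    ∀ t : ℕ → F, ∀ a : F,
      (Finset.univ.filter
        (fun x : Fin u → F =>
          (∀ w ∈ Finset.Icc 1 (u - 2), R w (c w) x = t w) ∧ R v i' x = a)).card = s := by
  intro c v hv1 hv2 i' hne t a
  -- representation of each R w (o) as a linear form
  have hrep : ∀ (o : Option (Option F × {y : F // y ≠ 0})) (w : ℕ)
      (h1 : 1 ≤ w) (h2 : w ≤ u - 2) (x : Fin u → F),
      R w o x = st14A o * x ⟨0, by omega⟩ + st14B o * x ⟨1, by omega⟩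
        + st14N o * x ⟨w + 1, by omega⟩ := by
    intro o w h1 h2 x
    rcases o with _ | ⟨_ | μ, ν⟩
    · rw [hR3 w h1 h2]; simp [st14A, st14B, st14N]
    · rw [hR2 w h1 h2 ν]; simp [st14A, st14B, st14N]
    · rw [hR1 w h1 h2 μ ν]; simp [st14A, st14B, st14N]
  have hNv : st14N (c v) ≠ 0 := st14N_ne_zero _
  have hvmem : v ∈ Finset.Icc 1 (u - 2) := Finset.mem_Icc.mpr ⟨hv1, hv2⟩
  set A'' : F := st14N (c v) * st14A i' - st14N i' * st14A (c v) with hA''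
  set B'' : F := st14N (c v) * st14B i' - st14N i' * st14B (c v) with hB''
  set C : F := st14N (c v) * a - st14N i' * t v with hC
  -- the inverse construction
  set X : F × F → (Fin u → F) := fun p i =>
    if i.val = 0 then p.1 else if i.val = 1 then p.2
    else (st14N (c (i.val - 1)))⁻¹ *
      (t (i.val - 1) - st14A (c (i.val - 1)) * p.1 - st14B (c (i.val - 1)) * p.2) with hX
  rw [← st14_card_line A'' B'' C (st14_key (c v) i' hne), ← hcard] at *
  refine Finset.card_nbij' (fun x => (x ⟨0, by omega⟩, x ⟨1, by omega⟩)) X ?_ ?_ ?_ ?_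
  · -- forward map lands in the line
    intro x hx
    simp only [Finset.mem_coe, Finset.mem_filter, Finset.mem_univ, true_and] at hx ⊢
    obtain ⟨hall, hlast⟩ := hx
    have e1 := hall v hvmem
    rw [hrep (c v) v hv1 hv2 x] at e1
    rw [hrep i' v hv1 hv2 x] at hlast
    rw [hA'', hB'', hC]
    linear_combination st14N (c v) * hlast - st14N i' * e1
  · -- inverse map lands in the fiber
    intro p hp
    simp only [Finset.mem_coe, Finset.mem_filter, Finset.mem_univ, true_and] at hp ⊢
    have hX0 : X p ⟨0, by omega⟩ = p.1 := by simp [hX]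
    have hX1 : X p ⟨1, by omega⟩ = p.2 := by simp [hX]
    have hXw : ∀ (w : ℕ) (h1 : 1 ≤ w) (h2 : w ≤ u - 2),
        X p ⟨w + 1, by omega⟩ = (st14N (c w))⁻¹ *
          (t w - st14A (c w) * p.1 - st14B (c w) * p.2) := by
      intro w h1 h2
      have h0 : w + 1 ≠ 0 := by omega
      have h1' : w + 1 ≠ 1 := by omega
      simp [hX, h0, h1']
      intro hw0; exact absurd hw0 (by omega)
    constructor
    · intro w hw
      rw [Finset.mem_Icc] at hw
      rw [hrep (c w) w hw.1 hw.2, hX0, hX1, hXw w hw.1 hw.2]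
      have hNw : st14N (c w) ≠ 0 := st14N_ne_zero _
      field_simp
      ring
    · rw [hrep i' v hv1 hv2, hX0, hX1, hXw v hv1 hv2]
      rw [hA'', hB'', hC] at hp
      field_simp
      linear_combination hp
  · -- left inverse
    intro x hx
    simp only [Finset.mem_coe, Finset.mem_filter, Finset.mem_univ, true_and] at hx
    obtain ⟨hall, _⟩ := hx
    funext i
    by_cases h0 : i.val = 0
    · have : i = ⟨0, by omega⟩ := Fin.ext h0
      rw [this]; simp [hX]
    · by_cases h1 : i.val = 1
      · have : i = ⟨1, by omega⟩ := Fin.ext h1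
        rw [this]; simp [hX]
      · have hi2 : 2 ≤ i.val := by omega
        have hiu : i.val ≤ u - 1 := by omega
        set w := i.val - 1 with hw
        have hw1 : 1 ≤ w := by omega
        have hw2 : w ≤ u - 2 := by omega
        have e1 := hall w (Finset.mem_Icc.mpr ⟨hw1, hw2⟩)
        rw [hrep (c w) w hw1 hw2 x] at e1
        have hieq : (⟨w + 1, by omega⟩ : Fin u) = i := Fin.ext (by simp [hw]; omega)
        rw [hieq] at e1
        have hNw : st14N (c w) ≠ 0 := st14N_ne_zero _
        simp only [hX, h0, h1, if_false]
        rw [← hw]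
        field_simp
        linear_combination -e1
  · -- right inverse
    intro p _
    have hX0 : X p ⟨0, by omega⟩ = p.1 := by simp [hX]
    have hX1 : X p ⟨1, by omega⟩ = p.2 := by simp [hX]
    exact Prod.ext hX0 hX1
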